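/- arXiv:2501.07292 — 6 statements merged into one kernel-verified Lean document; each statement's English description precedes it below -/
import Mathlib

section
/- Let ρ and σ be positive semidefinite Hermitian matrices on ℂ^d with supp(ρ) ⊆ supp(σ), and let t ∈ (0,1]. Then D_{f_t}(ρ‖σ) = inf_Z (1/t)·( tr[ρ] + tr[ρ(Z+Z†)] + (1−t)·tr[ρ Z†Z] + t·tr[σ Z Z†] ), where the infimum is taken over all d×d complex matrices Z. -/
noncomputable section

namespace QRE

open scoped ComplexOrder

open Matrix

variable {d : ℕ}

/-- The rank-one projector `|u⟩⟨u|` associated with a vector `u ∈ ℂ^d`. -/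
def rankOne (u : EuclideanSpace ℂ (Fin d)) : Matrix (Fin d) (Fin d) ℂ :=
  Matrix.of fun i j => u i * (starRingEnd ℂ) (u j)

/-- Functional calculus on the support of a Hermitian matrix: apply `g` to the
positive eigenvalues, and `0` to the rest. -/
def matFun (g : ℝ → ℝ) {A : Matrix (Fin d) (Fin d) ℂ} (hA : A.IsHermitian) :
    Matrix (Fin d) (Fin d) ℂ :=
  ∑ j, (if 0 < hA.eigenvalues j then (g (hA.eigenvalues j) : ℂ) else 0) •
    rankOne (hA.eigenvectorBasis j)

/-- The orthogonal projection onto the support (column space) of a Hermitian matrix. -/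
def suppProj {A : Matrix (Fin d) (Fin d) ℂ} (hA : A.IsHermitian) :
    Matrix (Fin d) (Fin d) ℂ :=
  matFun (fun _ => 1) hA

/-- The standard quantum `f`-divergence (for `supp ρ ⊆ supp σ`, where the `f(0⁺)` term
vanishes): `D_f(ρ‖σ) = Σ_{j : η_j > 0} Σ_{k : μ_k > 0} η_j f(μ_k/η_j) tr[P_j Q_k]`. -/
def Df (f : ℝ → ℝ) {ρ σ : Matrix (Fin d) (Fin d) ℂ}
    (hρ : ρ.IsHermitian) (hσ : σ.IsHermitian) : ℝ :=
  ∑ j, ∑ k,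
    if 0 < hρ.eigenvalues j ∧ 0 < hσ.eigenvalues k then
      hρ.eigenvalues j * f (hσ.eigenvalues k / hρ.eigenvalues j) *
        (Matrix.trace (rankOne (hρ.eigenvectorBasis j) *
          rankOne (hσ.eigenvectorBasis k))).re
    else 0

/-- `f_t(x) = (x-1)/(t(x-1)+1)`. -/
def ft (t x : ℝ) : ℝ := (x - 1) / (t * (x - 1) + 1)

/-- A quantum state: positive semidefinite with unit trace. -/
def IsState (ρ : Matrix (Fin d) (Fin d) ℂ) : Prop := ρ.PosSemidef ∧ ρ.trace = 1

/-- The Umegaki relative entropy `tr[ρ (log₂ ρ − log₂ σ)]` (logs on the supports). -/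
def relEnt {ρ σ : Matrix (Fin d) (Fin d) ℂ} (hρ : ρ.IsHermitian) (hσ : σ.IsHermitian) : ℝ :=
  (Matrix.trace (ρ * (matFun (Real.logb 2) hρ - matFun (Real.logb 2) hσ))).re

/-- `Q_α(ρ‖σ) = tr[ρ^α σ^{1-α}]`, matrix powers by functional calculus on the support. -/
def Qalpha (α : ℝ) {ρ σ : Matrix (Fin d) (Fin d) ℂ}
    (hρ : ρ.IsHermitian) (hσ : σ.IsHermitian) : ℝ :=
  (Matrix.trace (matFun (fun y => y ^ α) hρ * matFun (fun y => y ^ (1 - α)) hσ)).re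

/-- `Q₀(ρ‖σ) = tr[ρ⁰ σ]`. -/
def Qzero {ρ : Matrix (Fin d) (Fin d) ℂ} (hρ : ρ.IsHermitian)
    (σ : Matrix (Fin d) (Fin d) ℂ) : ℝ :=
  (Matrix.trace (suppProj hρ * σ)).re

/-- `Q₂(ρ‖σ) = tr[ρ² σ⁺]`, with `σ⁺` the Moore–Penrose pseudo-inverse of `σ`. -/
def Qtwo (ρ : Matrix (Fin d) (Fin d) ℂ) {σ : Matrix (Fin d) (Fin d) ℂ}
    (hσ : σ.IsHermitian) : ℝ :=
  (Matrix.trace (ρ * ρ * matFun (fun y => y⁻¹) hσ)).re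

/-! Let `U`, `V` be unitaries whose columns are eigenbases `(e_j)` of `ρ` and `(f_k)` of `σ`,
put `c_{jk} = ⟨e_j, f_k⟩`, and let `w_{kj} = ⟨f_k, Z e_j⟩` be the entries of `V† Z U`.
Then `t` times the objective is
`Σ_{j,k} (η_j |c_{jk}|² + 2 η_j Re(c_{jk} w_{kj}) + ((1-t) η_j + t μ_k) |w_{kj}|²)`,
a sum of quadratics in independent complex variables. Completing the square, the `(j,k)`
summand divided by `t` has minimum `η_j f_t(μ_k/η_j) |c_{jk}|²` when `η_j, μ_k > 0`, and
minimum `0` otherwise, because `supp ρ ⊆ supp σ` forces `c_{jk} = 0` when `η_j > 0 = μ_k`.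
Summing the minima gives `D_{f_t}(ρ‖σ)`, attained at `Z = V W U†` for `W` the matrix of
minimizing entries. -/

open Complex

def ftTerm (t η μ : ℝ) (c w : ℂ) : ℝ :=
  η * normSq c + 2 * η * (c * w).re + ((1 - t) * η + t * μ) * normSq w

lemma isLeast_range_add_mul_normSq (K : ℝ) {p : ℝ} (hp : 0 ≤ p) (z : ℂ) :
    IsLeast (Set.range fun w => K + p * normSq (w + z)) K :=
  ⟨⟨-z, by simp⟩, by
    rintro _ ⟨w, rfl⟩
    exact le_add_of_nonneg_right (mul_nonneg hp (normSq_nonneg _))⟩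

lemma mul_ft_div {t η μ : ℝ} (hη : η ≠ 0) :
    η * ft t (μ / η) = η * (μ - η) / ((1 - t) * η + t * μ) := by
  have : t * (μ / η - 1) + 1 = ((1 - t) * η + t * μ) / η := by field_simp; ring
  rw [ft, this]
  field_simp

lemma isLeast_ftTerm {t η μ : ℝ} (ht0 : 0 < t) (ht1 : t ≤ 1) (hη : 0 ≤ η) (hμ : 0 ≤ μ)
    {c : ℂ} (hc : 0 < η → μ = 0 → c = 0) :
    IsLeast (Set.range fun w => (1 / t) * ftTerm t η μ c w)
      (if 0 < η ∧ 0 < μ then η * ft t (μ / η) * normSq c else 0) := by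
  set b := (1 - t) * η + t * μ with hb_def
  have hb : 0 ≤ b := by nlinarith
  split_ifs with hημ
  · obtain ⟨hη', hμ'⟩ := hημ
    have hb' : 0 < b := by nlinarith
    -- completing the square, using `b - η = t (μ - η)`
    convert isLeast_range_add_mul_normSq _ (div_nonneg hb ht0.le)
      (((η / b : ℝ) : ℂ) * (starRingEnd ℂ) c) using 3 with w
    rw [ftTerm, mul_ft_div hη'.ne', ← hb_def]
    simp only [normSq_apply, add_re, add_im, mul_re, mul_im, ofReal_re, ofReal_im, conj_re,
      conj_im]
    field_simp
    ring
  · have hηc : η * normSq c = 0 ∧ η * c = 0 := by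
      rcases hη.lt_or_eq with hη' | rfl
      · have hμ0 : μ = 0 := le_antisymm (not_lt.mp fun h => hημ ⟨hη', h⟩) hμ
        simp [hc hη' hμ0]
      · simp
    convert isLeast_range_add_mul_normSq 0 (div_nonneg hb ht0.le) 0 using 3 with w
    have : η * (c * w).re = (η * c * w).re := by simp [mul_assoc]
    rw [ftTerm, mul_assoc 2, this, hηc.1, hηc.2]
    simp only [zero_mul, zero_re, mul_zero, add_zero, zero_add]
    ring

lemma trace_mul_diagonal_mul_mul {n R : Type*} [Fintype n] [DecidableEq n] [CommSemiring R]
    (U U' : Matrix n n R) (η : n → R) (X : Matrix n n R) :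
    trace (U * diagonal η * U' * X) = ∑ i, η i * (U' * X * U) i i := by
  rw [mul_assoc, mul_assoc, trace_mul_comm, mul_assoc]
  simp [trace, diagonal_mul]

lemma mul_conjTranspose_self_apply_self {m n : Type*} [Fintype m] (A : Matrix n m ℂ) (i : n) :
    (A * Aᴴ) i i = ∑ k, (normSq (A i k) : ℂ) := by
  simp [mul_apply, mul_conj]

lemma conjTranspose_mul_self_apply_self {m n : Type*} [Fintype m] (A : Matrix m n ℂ) (j : n) :
    (Aᴴ * A) j j = ∑ k, (normSq (A k j) : ℂ) := by
  simp only [mul_apply, conjTranspose_apply, RCLike.star_def, mul_comm (starRingEnd ℂ _),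
    mul_conj]

lemma re_traces_eq_sum_ftTerm {n : Type*} [Fintype n] [DecidableEq n] {ρ σ : Matrix n n ℂ}
    {U V : unitaryGroup n ℂ} {η μ : n → ℝ}
    (hρ : ρ = U * diagonal (fun i => (η i : ℂ)) * star U)
    (hσ : σ = V * diagonal (fun i => (μ i : ℂ)) * star V) (t : ℝ) (Z : Matrix n n ℂ) :
    (trace ρ).re + (trace (ρ * (Z + Zᴴ))).re + (1 - t) * (trace (ρ * (Zᴴ * Z))).re +
        t * (trace (σ * (Z * Zᴴ))).re =
      ∑ j, ∑ k, ftTerm t (η j) (μ k) ((star U * V : Matrix n n ℂ) j k)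
        ((star V * Z * U : Matrix n n ℂ) k j) := by
  set C : Matrix n n ℂ := star U * V
  set W : Matrix n n ℂ := star V * Z * U
  have hCC : (star U * 1 * U : Matrix n n ℂ) = C * Cᴴ := by
    simp [C, ← star_eq_conjTranspose, mul_assoc, ← mul_assoc (V : Matrix n n ℂ)]
  have hCW : (star U * Z * U : Matrix n n ℂ) = C * W := by
    simp [C, W, mul_assoc, ← mul_assoc (V : Matrix n n ℂ)]
  have hCW' : (star U * Zᴴ * U : Matrix n n ℂ) = (C * W)ᴴ := by
    rw [← hCW]
    simp [← star_eq_conjTranspose, mul_assoc]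
  have hWW : (star U * (Zᴴ * Z) * U : Matrix n n ℂ) = Wᴴ * W := by
    simp [W, ← star_eq_conjTranspose, mul_assoc, ← mul_assoc (V : Matrix n n ℂ)]
  have hWW' : (star V * (Z * Zᴴ) * V : Matrix n n ℂ) = W * Wᴴ := by
    simp [W, ← star_eq_conjTranspose, mul_assoc, ← mul_assoc (U : Matrix n n ℂ)]
  rw [show trace ρ = trace (ρ * 1) by rw [mul_one], mul_add, trace_add, hρ, hσ]
  simp only [trace_mul_diagonal_mul_mul, hCC, hCW, hCW', hWW, hWW']
  simp only [mul_conjTranspose_self_apply_self, conjTranspose_mul_self_apply_self,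
    conjTranspose_apply, RCLike.star_def]
  simp only [mul_apply, re_sum, add_re, re_ofReal_mul, ofReal_re, conj_re, Finset.mul_sum]
  rw [Finset.sum_comm (f := fun k j => t * (μ k * normSq (W k j)))]
  simp only [← Finset.sum_add_distrib]
  exact Finset.sum_congr rfl fun j _ => Finset.sum_congr rfl fun k _ => by rw [ftTerm]; ring

lemma star_mul_apply_eq_dotProduct {n : Type*} [Fintype n] (A B : Matrix n n ℂ) (j k : n) :
    (star A * B) j k = star (A.col j) ⬝ᵥ B.col k := by
  simp [mul_apply, dotProduct]

lemma re_trace_rankOne_mul_rankOne (u v : EuclideanSpace ℂ (Fin d)) :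
    (trace (rankOne u * rankOne v)).re = normSq (star ⇑u ⬝ᵥ ⇑v) := by
  have hconj : ⇑u ⬝ᵥ star ⇑v = starRingEnd ℂ (star ⇑u ⬝ᵥ ⇑v) := by
    simp [dotProduct, mul_comm]
  change (trace (vecMulVec ⇑u (star ⇑u) * vecMulVec ⇑v (star ⇑v))).re = _
  rw [vecMulVec_mul_vecMulVec, trace_vecMulVec, dotProduct_smul, hconj, smul_eq_mul,
    mul_conj, ofReal_re]

lemma Df_eq_sum_normSq {f : ℝ → ℝ} {ρ σ : Matrix (Fin d) (Fin d) ℂ} (hρ : ρ.IsHermitian)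
    (hσ : σ.IsHermitian) :
    Df f hρ hσ = ∑ j, ∑ k, if 0 < hρ.eigenvalues j ∧ 0 < hσ.eigenvalues k then
      hρ.eigenvalues j * f (hσ.eigenvalues k / hρ.eigenvalues j) *
        normSq ((star hρ.eigenvectorUnitary * hσ.eigenvectorUnitary :
          Matrix (Fin d) (Fin d) ℂ) j k)
      else 0 := by
  simp only [Df, re_trace_rankOne_mul_rankOne, Unitary.coe_star, star_mul_apply_eq_dotProduct]
  rfl

lemma dotProduct_eq_zero_of_mem_range {n : Type*} [Fintype n] {σ : Matrix n n ℂ}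
    (hσ : σ.IsHermitian) {v w : n → ℂ} (hv : v ∈ LinearMap.range σ.mulVecLin)
    (hw : σ *ᵥ w = 0) : star v ⬝ᵥ w = 0 := by
  obtain ⟨x, rfl⟩ := hv
  rw [mulVecLin_apply, star_mulVec, ← dotProduct_mulVec, hσ.eq, hw, dotProduct_zero]

lemma eigenvectorBasis_mem_range {n : Type*} [Fintype n] [DecidableEq n] {A : Matrix n n ℂ}
    (hA : A.IsHermitian) {j : n} (hj : hA.eigenvalues j ≠ 0) :
    ⇑(hA.eigenvectorBasis j) ∈ LinearMap.range A.mulVecLin :=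
  ⟨(hA.eigenvalues j)⁻¹ • ⇑(hA.eigenvectorBasis j), by
    rw [mulVecLin_apply, mulVec_smul, hA.mulVec_eigenvectorBasis, smul_smul, inv_mul_cancel₀ hj,
      one_smul]⟩

lemma star_eigenvectorUnitary_mul_apply_eq_zero {n : Type*} [Fintype n] [DecidableEq n]
    {ρ σ : Matrix n n ℂ} (hρ : ρ.IsHermitian) (hσ : σ.IsHermitian)
    (hsupp : LinearMap.range ρ.mulVecLin ≤ LinearMap.range σ.mulVecLin) {j k : n}
    (hj : hρ.eigenvalues j ≠ 0) (hk : hσ.eigenvalues k = 0) :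
    (star hρ.eigenvectorUnitary * hσ.eigenvectorUnitary : Matrix n n ℂ) j k = 0 := by
  rw [Unitary.coe_star, star_mul_apply_eq_dotProduct, IsHermitian.eigenvectorUnitary_col_eq,
    IsHermitian.eigenvectorUnitary_col_eq]
  refine dotProduct_eq_zero_of_mem_range hσ (hsupp (eigenvectorBasis_mem_range hρ hj)) ?_
  rw [hσ.mulVec_eigenvectorBasis, hk, zero_smul]

/-- Variational expression for the standard quantum `f_t`-divergence. -/
theorem variational_ft_divergence (ρ σ : Matrix (Fin d) (Fin d) ℂ)
    (hρ : ρ.PosSemidef) (hσ : σ.PosSemidef)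
    (hsupp : LinearMap.range ρ.mulVecLin ≤ LinearMap.range σ.mulVecLin)
    (t : ℝ) (ht : t ∈ Set.Ioc (0 : ℝ) 1) :
    Df (ft t) hρ.1 hσ.1 =
      ⨅ Z : Matrix (Fin d) (Fin d) ℂ,
        (1 / t) * ((Matrix.trace ρ).re + (Matrix.trace (ρ * (Z + Zᴴ))).re +
          (1 - t) * (Matrix.trace (ρ * (Zᴴ * Z))).re +
          t * (Matrix.trace (σ * (Z * Zᴴ))).re) := by
  obtain ⟨ht0, ht1⟩ := ht
  set U := hρ.1.eigenvectorUnitary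
  set V := hσ.1.eigenvectorUnitary
  have hentry j k := isLeast_ftTerm ht0 ht1 (hρ.eigenvalues_nonneg j) (hσ.eigenvalues_nonneg k)
    fun hj hk => star_eigenvectorUnitary_mul_apply_eq_zero hρ.1 hσ.1 hsupp hj.ne' hk
  choose w hw using fun j k => (hentry j k).1
  have hobj := re_traces_eq_sum_ftTerm (η := hρ.1.eigenvalues) (μ := hσ.1.eigenvalues)
    hρ.1.spectral_theorem hσ.1.spectral_theorem t
  symm
  refine IsGLB.ciInf_eq (IsLeast.isGLB ⟨⟨V * of (fun k j => w j k) * star U, ?_⟩, ?_⟩)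
  · have hW : (star V * (V * of (fun k j => w j k) * star U) * U : Matrix (Fin d) (Fin d) ℂ) =
        of fun k j => w j k := by
      simp [mul_assoc, ← mul_assoc (star (V : Matrix (Fin d) (Fin d) ℂ))]
    dsimp only
    rw [hobj, hW, Df_eq_sum_normSq]
    simp only [Finset.mul_sum, of_apply]
    exact Finset.sum_congr rfl fun j _ => Finset.sum_congr rfl fun k _ => hw j k
  · rintro _ ⟨Z, rfl⟩
    dsimp only
    rw [hobj, Df_eq_sum_normSq]
    simp only [Finset.mul_sum]
    gcongr with j _ k _
    exact (hentry j k).2 ⟨_, rfl⟩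

end QRE
end
end

section
/- Let α ∈ (0,1) ∪ (1,2). For every real x > 0, x^{1−α} − 1 = (sin(απ)/π) · ∫₀¹ ((x−1)/(t(x−1)+1)) · t^{α−1} (1−t)^{1−α} dt, where the integral is a convergent improper integral on (0,1) (the exponents α−1 and 1−α both exceed −1). -/
noncomputable section

namespace QRE

open scoped ComplexOrder

open Matrix

variable {d : ℕ}

/-! Both sides vanish at `x = 1`, so it suffices to compare derivatives on `(0, ∞)`.
Differentiating under the integral sign replaces `f_t(x)` by `1 / (t(x-1)+1)²`, and the Möbius
substitution `t = u / (u + x(1-u))`, a bijection of `(0,1)`, gives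
`∫₀¹ t^{α-1} (1-t)^{1-α} / (t(x-1)+1)² dt = x^{-α} B(α, 2-α)`.
Finally `B(α, 2-α) = Γ(α) Γ(2-α) = (1-α) π / sin(απ)` by Euler's reflection formula, which
matches the derivative `(1-α) x^{-α}` of the left-hand side. -/

open Set MeasureTheory Real

lemma intervalIntegrable_rpow_mul_one_sub_rpow_left {p : ℝ} (hp : -1 < p) (q : ℝ) :
    IntervalIntegrable (fun t : ℝ => t ^ p * (1 - t) ^ q) volume 0 (1 / 2) := by
  refine (intervalIntegral.intervalIntegrable_rpow' hp).mul_continuousOn ?_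
  refine ContinuousOn.rpow_const (by fun_prop) fun t ht => Or.inl ?_
  rw [uIcc_of_le (by norm_num)] at ht
  linarith [ht.2]

lemma intervalIntegrable_rpow_mul_one_sub_rpow {p q : ℝ} (hp : -1 < p) (hq : -1 < q) :
    IntervalIntegrable (fun t : ℝ => t ^ p * (1 - t) ^ q) volume 0 1 := by
  refine (intervalIntegrable_rpow_mul_one_sub_rpow_left hp q).trans ?_
  have := (intervalIntegrable_rpow_mul_one_sub_rpow_left hq p).comp_sub_left 1
  norm_num at this
  simpa only [mul_comm] using this.symm

lemma integral_rpow_mul_one_sub_rpow {a b : ℝ} (ha : 0 < a) (hb : 0 < b) :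
    ∫ t in (0 : ℝ)..1, t ^ (a - 1) * (1 - t) ^ (b - 1) = Gamma a * Gamma b / Gamma (a + b) := by
  apply Complex.ofReal_injective
  have hbeta := Complex.betaIntegral_eq_Gamma_mul_div a b (by simpa) (by simpa)
  push_cast [← Complex.Gamma_ofReal]
  rw [← hbeta, Complex.betaIntegral, ← intervalIntegral.integral_ofReal]
  refine intervalIntegral.integral_congr fun t ht => ?_
  rw [uIcc_of_le zero_le_one] at ht
  push_cast [Complex.ofReal_cpow ht.1, Complex.ofReal_cpow (sub_nonneg.2 ht.2)]
  rfl

lemma integral_rpow_mul_one_sub_rpow_eq_pi_div_sin {α : ℝ} (h0 : 0 < α) (h2 : α < 2)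
    (h1 : α ≠ 1) :
    ∫ t in (0 : ℝ)..1, t ^ (α - 1) * (1 - t) ^ (1 - α) = (1 - α) * (π / sin (π * α)) := by
  have h := integral_rpow_mul_one_sub_rpow h0 (sub_pos.2 h2)
  rw [show 2 - α - 1 = 1 - α by ring, show α + (2 - α) = 2 by ring, Gamma_two, div_one,
    show 2 - α = 1 - α + 1 by ring, Gamma_add_one (sub_ne_zero.2 h1.symm)] at h
  rw [h, ← Gamma_mul_Gamma_one_sub]
  ring

lemma sin_pi_mul_ne_zero {α : ℝ} (h0 : 0 < α) (h2 : α < 2) (h1 : α ≠ 1) : sin (π * α) ≠ 0 := by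
  refine sin_ne_zero_iff.2 fun n hn => h1 ?_
  have hn : (n : ℝ) = α := by nlinarith [pi_pos]
  have hn0 : (0 : ℤ) < n := by exact_mod_cast hn ▸ h0
  have hn2 : n < (2 : ℤ) := by exact_mod_cast hn ▸ h2
  rw [← hn, show n = 1 by omega, Int.cast_one]

lemma sin_mul_pi_div_pi_mul_integral_rpow_mul_one_sub_rpow {α : ℝ} (h0 : 0 < α) (h2 : α < 2)
    (h1 : α ≠ 1) :
    sin (α * π) / π * ∫ t in (0 : ℝ)..1, t ^ (α - 1) * (1 - t) ^ (1 - α) = 1 - α := by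
  rw [integral_rpow_mul_one_sub_rpow_eq_pi_div_sin h0 h2 h1, mul_comm α]
  field_simp [sin_pi_mul_ne_zero h0 h2 h1, pi_ne_zero]

lemma ft_one (t : ℝ) : ft t 1 = 0 := by simp [ft]

lemma min_le_mul_sub_one_add_one {z t : ℝ} (ht0 : 0 ≤ t) (ht1 : t ≤ 1) :
    min z 1 ≤ t * (z - 1) + 1 := by
  nlinarith [mul_le_mul_of_nonneg_left (min_le_left z 1) ht0,
    mul_le_mul_of_nonneg_left (min_le_right z 1) (sub_nonneg.2 ht1)]

lemma mul_sub_one_add_one_pos {z t : ℝ} (hz : 0 < z) (ht0 : 0 ≤ t) (ht1 : t ≤ 1) :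
    0 < t * (z - 1) + 1 :=
  (lt_min hz one_pos).trans_le (min_le_mul_sub_one_add_one ht0 ht1)

lemma hasDerivAt_ft {t z : ℝ} (hz : t * (z - 1) + 1 ≠ 0) :
    HasDerivAt (ft t) (1 / (t * (z - 1) + 1) ^ 2) z := by
  have h : HasDerivAt (ft t) _ z := ((hasDerivAt_id' z).sub_const 1).div
    ((((hasDerivAt_id' z).sub_const 1).const_mul t).add_const 1) hz
  exact h.congr_deriv (by ring)

lemma hasDerivAt_integral_ft_mul {w : ℝ → ℝ} (hw : IntervalIntegrable w volume 0 1) {y : ℝ}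
    (hy : 0 < y) :
    HasDerivAt (fun z => ∫ t in (0 : ℝ)..1, ft t z * w t)
      (∫ t in (0 : ℝ)..1, w t / (t * (y - 1) + 1) ^ 2) y := by
  set m := min (y / 2) 1
  have hm : 0 < m := lt_min (half_pos hy) one_pos
  have hden : ∀ z ∈ Metric.ball y (y / 2), ∀ t ∈ uIoc (0 : ℝ) 1, m ≤ t * (z - 1) + 1 := by
    intro z hz t ht
    rw [uIoc_of_le zero_le_one] at ht
    rw [Metric.mem_ball, Real.dist_eq, abs_lt] at hz
    exact (min_le_min_right 1 (by linarith)).trans (min_le_mul_sub_one_add_one ht.1.le ht.2)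
  have hmeas : ∀ z, AEStronglyMeasurable (fun t => ft t z * w t) (volume.restrict (uIoc 0 1)) :=
    fun z => (by unfold ft; fun_prop : Measurable fun t => ft t z).aestronglyMeasurable.mul
      (hw.def'.aestronglyMeasurable)
  refine (intervalIntegral.hasDerivAt_integral_of_dominated_loc_of_deriv_le
    (F' := fun z t => w t / (t * (z - 1) + 1) ^ 2) (bound := fun t => ‖w t‖ / m ^ 2)
    (Metric.ball_mem_nhds y (half_pos hy)) (.of_forall hmeas) ?_ ?_ ?_ (hw.norm.div_const _)
    ?_).2
  · refine hw.continuousOn_mul (ContinuousOn.div (by fun_prop) (by fun_prop) fun t ht => ?_)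
    rw [uIcc_of_le zero_le_one] at ht
    exact (mul_sub_one_add_one_pos hy ht.1 ht.2).ne'
  · exact hw.def'.aestronglyMeasurable.mul
      (by fun_prop : Measurable fun t : ℝ => ((t * (y - 1) + 1) ^ 2)⁻¹).aestronglyMeasurable
  · refine .of_forall fun t ht z hz => ?_
    have hmt := hden z hz t ht
    rw [norm_div, norm_pow, Real.norm_of_nonneg (hm.trans_le hmt).le]
    gcongr
  · refine .of_forall fun t ht z hz => ?_
    exact ((hasDerivAt_ft (hm.trans_le (hden z hz t ht)).ne').mul_const (w t)).congr_deriv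
      (by ring)

def moebiusUnit (c u : ℝ) : ℝ := u / (u + c * (1 - u))

section moebiusUnit

variable {c u : ℝ}

lemma moebiusUnit_denom_pos (hc : 0 < c) (hu : u ∈ Ioo (0 : ℝ) 1) : 0 < u + c * (1 - u) := by
  have := mul_pos hc (sub_pos.2 hu.2)
  linarith [hu.1]

lemma mapsTo_moebiusUnit (hc : 0 < c) : MapsTo (moebiusUnit c) (Ioo 0 1) (Ioo 0 1) := by
  intro u hu
  have hd := moebiusUnit_denom_pos hc hu
  have := mul_pos hc (sub_pos.2 hu.2)
  exact ⟨div_pos hu.1 hd, (div_lt_one hd).2 (by linarith)⟩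

lemma one_sub_moebiusUnit (hd : u + c * (1 - u) ≠ 0) :
    1 - moebiusUnit c u = c * (1 - u) / (u + c * (1 - u)) := by
  unfold moebiusUnit
  field_simp
  ring

lemma moebiusUnit_mul_sub_one_add_one (hd : u + c * (1 - u) ≠ 0) :
    moebiusUnit c u * (c - 1) + 1 = c / (u + c * (1 - u)) := by
  unfold moebiusUnit
  field_simp
  ring

lemma moebiusUnit_inv_moebiusUnit (hc : 0 < c) (hu : u ∈ Ioo (0 : ℝ) 1) :
    moebiusUnit c⁻¹ (moebiusUnit c u) = u := by
  have hd := moebiusUnit_denom_pos hc hu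
  rw [moebiusUnit, one_sub_moebiusUnit hd.ne', moebiusUnit]
  field_simp
  ring

lemma bijOn_moebiusUnit (hc : 0 < c) : BijOn (moebiusUnit c) (Ioo 0 1) (Ioo 0 1) := by
  refine InvOn.bijOn ⟨fun u hu => moebiusUnit_inv_moebiusUnit hc hu, fun u hu => ?_⟩
    (mapsTo_moebiusUnit hc) (mapsTo_moebiusUnit (inv_pos.2 hc))
  simpa using moebiusUnit_inv_moebiusUnit (inv_pos.2 hc) hu

lemma hasDerivAt_moebiusUnit (hc : 0 < c) (hu : u ∈ Ioo (0 : ℝ) 1) :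
    HasDerivAt (moebiusUnit c) (c / (u + c * (1 - u)) ^ 2) u := by
  have h : HasDerivAt (moebiusUnit c) _ u := (hasDerivAt_id' u).div
    ((hasDerivAt_id' u).add (((hasDerivAt_const u 1).sub (hasDerivAt_id' u)).const_mul c))
    (moebiusUnit_denom_pos hc hu).ne'
  exact h.congr_deriv (by ring)

lemma setIntegral_Ioo_eq_setIntegral_comp_moebiusUnit {E : Type*} [NormedAddCommGroup E]
    [NormedSpace ℝ E] (hc : 0 < c) (g : ℝ → E) :
    ∫ t in Ioo 0 1, g t = ∫ u in Ioo 0 1, (c / (u + c * (1 - u)) ^ 2) • g (moebiusUnit c u) := by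
  have h := integral_image_eq_integral_abs_deriv_smul measurableSet_Ioo
    (fun u hu => (hasDerivAt_moebiusUnit hc hu).hasDerivWithinAt) (bijOn_moebiusUnit hc).injOn g
  rw [(bijOn_moebiusUnit hc).image_eq] at h
  rw [h]
  refine setIntegral_congr_fun measurableSet_Ioo fun u hu => ?_
  rw [abs_of_pos (div_pos hc (pow_pos (moebiusUnit_denom_pos hc hu) 2))]

end moebiusUnit

lemma integral_rpow_mul_one_sub_rpow_div_sq (α : ℝ) {c : ℝ} (hc : 0 < c) :
    ∫ t in (0 : ℝ)..1, t ^ (α - 1) * (1 - t) ^ (1 - α) / (t * (c - 1) + 1) ^ 2 =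
      c ^ (-α) * ∫ t in (0 : ℝ)..1, t ^ (α - 1) * (1 - t) ^ (1 - α) := by
  simp only [intervalIntegral.integral_of_le zero_le_one, integral_Ioc_eq_integral_Ioo]
  rw [setIntegral_Ioo_eq_setIntegral_comp_moebiusUnit hc, ← integral_const_mul]
  refine setIntegral_congr_fun measurableSet_Ioo fun u hu => ?_
  have hd := moebiusUnit_denom_pos hc hu
  have hu1 := sub_pos.2 hu.2
  rw [one_sub_moebiusUnit hd.ne', moebiusUnit_mul_sub_one_add_one hd.ne', moebiusUnit]
  set d := u + c * (1 - u)
  have hdd : d ^ (α - 1) * d ^ (1 - α) = 1 := by rw [← rpow_add hd]; norm_num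
  have hcc : c ^ (1 - α) = c * c ^ (-α) := by rw [sub_eq_add_neg, rpow_add hc, rpow_one]
  rw [smul_eq_mul, div_rpow hu.1.le hd.le, div_rpow (by positivity) hd.le,
    mul_rpow hc.le hu1.le, hcc]
  field_simp
  rw [mul_assoc, hdd, mul_one]

/-- Löwner's integral representation of the power function: for `α ∈ (0,1) ∪ (1,2)`
and `x > 0`,
`x^{1−α} − 1 = (sin(απ)/π) ∫₀¹ f_t(x) t^{α−1} (1−t)^{1−α} dt`. -/
theorem rpow_sub_one_eq_integral (α : ℝ)
    (hα : α ∈ Set.Ioo (0 : ℝ) 1 ∪ Set.Ioo (1 : ℝ) 2) (x : ℝ) (hx : 0 < x) :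
    x ^ (1 - α) - 1 =
      (Real.sin (α * Real.pi) / Real.pi) *
        ∫ t in (0 : ℝ)..1, ft t x * t ^ (α - 1) * (1 - t) ^ (1 - α) := by
  obtain ⟨h0, h2, h1⟩ : 0 < α ∧ α < 2 ∧ α ≠ 1 := by
    rcases hα with h | h
    · exact ⟨h.1, by linarith [h.2], h.2.ne⟩
    · exact ⟨by linarith [h.1], h.2, h.1.ne'⟩
  set w := fun t : ℝ => t ^ (α - 1) * (1 - t) ^ (1 - α)
  have hw : IntervalIntegrable w volume 0 1 :=
    intervalIntegrable_rpow_mul_one_sub_rpow (by linarith) (by linarith)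
  have hpow : ∀ y > 0, HasDerivAt (fun z : ℝ => z ^ (1 - α) - 1) ((1 - α) * y ^ (-α)) y :=
    fun y hy => by
      simpa using ((hasDerivAt_rpow_const (p := 1 - α) (.inl hy.ne')).sub_const 1)
  have hint : ∀ y > 0, HasDerivAt
      (fun z => sin (α * π) / π * ∫ t in (0 : ℝ)..1, ft t z * w t) ((1 - α) * y ^ (-α)) y :=
    fun y hy => by
      have h := (hasDerivAt_integral_ft_mul hw hy).const_mul (sin (α * π) / π)
      rw [integral_rpow_mul_one_sub_rpow_div_sq α hy, mul_left_comm,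
        sin_mul_pi_div_pi_mul_integral_rpow_mul_one_sub_rpow h0 h2 h1] at h
      exact h.congr_deriv (mul_comm _ _)
  have heq := isOpen_Ioi.eqOn_of_deriv_eq isPreconnected_Ioi
    (fun y hy => (hpow y hy).differentiableAt.differentiableWithinAt)
    (fun y hy => (hint y hy).differentiableAt.differentiableWithinAt)
    (fun y hy => (hpow y hy).deriv.trans (hint y hy).deriv.symm)
    (mem_Ioi.2 one_pos) (by simp [ft_one]) (mem_Ioi.2 hx)
  simpa [mul_assoc] using heq

end QRE
end
end

section
/- Let ρ and σ be positive semidefinite Hermitian matrices on ℂ^d, t ∈ [0,1], and define g(Z) := tr[ρ] + tr[ρ(Z+Z†)] + (1−t)·tr[ρ Z†Z] + t·tr[σ Z Z†] for d×d complex matrices Z. If a d×d complex matrix Z̃ satisfies the Sylvester equation (1−t)·Z̃ρ + t·σZ̃ = −ρ (equivalently, (1−t)·ρZ̃† + t·Z̃†σ = −ρ), then Z̃ is a global minimizer: g(Z̃) ≤ g(Z) for every d×d complex matrix Z, i.e. g(Z̃) = inf_Z g(Z). -/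
noncomputable section

namespace QRE

open scoped ComplexOrder

open Matrix

variable {d : ℕ}

/-- The loss `g(Z) = tr ρ + tr[ρ(Z+Z†)] + (1−t) tr[ρZ†Z] + t tr[σZZ†]`. -/
def loss (t : ℝ) (ρ σ Z : Matrix (Fin d) (Fin d) ℂ) : ℝ :=
  (Matrix.trace ρ).re + (Matrix.trace (ρ * (Z + Zᴴ))).re +
    (1 - t) * (Matrix.trace (ρ * (Zᴴ * Z))).re +
    t * (Matrix.trace (σ * (Z * Zᴴ))).re

/-
Expanding around `Z`, `g(Z + W) = g(Z) + 2 Re tr[G W] + (1−t) tr[ρ W†W] + t tr[σ W W†]` with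
`G = ρ + (1−t) ρZ† + t Z†σ`, the conjugate transpose of `(1−t) Zρ + t σZ + ρ`. So the Sylvester
equation says exactly that the linear term vanishes at `Z̃`, while the quadratic term is nonnegative:
`tr[ρ W†W] = tr[W ρ W†]` and `tr[σ W W†] = tr[W†σ W]` are traces of positive semidefinite matrices.
-/

section

variable {A : Matrix (Fin d) (Fin d) ℂ}

lemma re_trace_mul_conjTranspose (hA : A.IsHermitian) (B : Matrix (Fin d) (Fin d) ℂ) :
    (trace (A * Bᴴ)).re = (trace (A * B)).re := by
  rw [← hA.eq, ← conjTranspose_mul, trace_conjTranspose, Complex.star_def, Complex.conj_re,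
    trace_mul_comm, hA.eq]

lemma re_trace_mul_conjTranspose_mul_nonneg (hA : A.PosSemidef) (W : Matrix (Fin d) (Fin d) ℂ) :
    0 ≤ (trace (A * (Wᴴ * W))).re := by
  rw [trace_mul_comm, mul_assoc, trace_mul_comm]
  exact (Complex.nonneg_iff.mp (hA.mul_mul_conjTranspose_same W).trace_nonneg).1

lemma re_trace_mul_mul_conjTranspose_nonneg (hA : A.PosSemidef) (W : Matrix (Fin d) (Fin d) ℂ) :
    0 ≤ (trace (A * (W * Wᴴ))).re := by
  simpa using re_trace_mul_conjTranspose_mul_nonneg hA Wᴴ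

end

def lossGrad (t : ℝ) (ρ σ Z : Matrix (Fin d) (Fin d) ℂ) : Matrix (Fin d) (Fin d) ℂ :=
  ρ + ((1 - t : ℝ) : ℂ) • (ρ * Zᴴ) + ((t : ℝ) : ℂ) • (Zᴴ * σ)

lemma lossGrad_eq_zero_of_sylvester {t : ℝ} {ρ σ Z : Matrix (Fin d) (Fin d) ℂ}
    (hρ : ρ.IsHermitian) (hσ : σ.IsHermitian)
    (hZ : ((1 - t : ℝ) : ℂ) • (Z * ρ) + ((t : ℝ) : ℂ) • (σ * Z) = -ρ) :
    lossGrad t ρ σ Z = 0 := by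
  have h := congrArg conjTranspose hZ
  simp only [conjTranspose_add, conjTranspose_smul, conjTranspose_mul, conjTranspose_neg,
    hρ.eq, hσ.eq, Complex.star_def, Complex.conj_ofReal] at h
  rw [lossGrad, add_assoc, h, add_neg_cancel]

lemma loss_add {ρ σ : Matrix (Fin d) (Fin d) ℂ} (hρ : ρ.IsHermitian) (hσ : σ.IsHermitian)
    (t : ℝ) (Z W : Matrix (Fin d) (Fin d) ℂ) :
    loss t ρ σ (Z + W) = loss t ρ σ Z + 2 * (trace (lossGrad t ρ σ Z * W)).re +
      ((1 - t) * (trace (ρ * (Wᴴ * W))).re + t * (trace (σ * (W * Wᴴ))).re) := by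
  have hW := re_trace_mul_conjTranspose hρ W
  have hassoc : trace (ρ * (Zᴴ * W)) = trace (ρ * Zᴴ * W) := by rw [mul_assoc]
  have hcycle : trace (σ * (W * Zᴴ)) = trace (Zᴴ * σ * W) := by
    rw [← mul_assoc, trace_mul_cycle]
  have hZW : (trace (ρ * (Wᴴ * Z))).re = (trace (ρ * Zᴴ * W)).re := by
    simpa [hassoc] using re_trace_mul_conjTranspose hρ (Zᴴ * W)
  have hWZ : (trace (σ * (Z * Wᴴ))).re = (trace (Zᴴ * σ * W)).re := by
    rw [show Z * Wᴴ = (W * Zᴴ)ᴴ by simp, re_trace_mul_conjTranspose hσ, hcycle]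
  simp only [loss, lossGrad, conjTranspose_add, mul_add, add_mul, trace_add, trace_smul,
    smul_mul_assoc, Complex.add_re, smul_eq_mul, Complex.re_ofReal_mul, hassoc, hcycle]
  rw [hW, hZW, hWZ]
  ring

/-- Any solution of the Sylvester equation `(1−t) Z̃ρ + t σZ̃ = −ρ` is a global
minimizer of the loss. -/
theorem sylvester_solution_is_minimizer (ρ σ : Matrix (Fin d) (Fin d) ℂ)
    (hρ : ρ.PosSemidef) (hσ : σ.PosSemidef) (t : ℝ) (ht : t ∈ Set.Icc (0 : ℝ) 1)
    (Ztil : Matrix (Fin d) (Fin d) ℂ)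
    (hZ : ((1 - t : ℝ) : ℂ) • (Ztil * ρ) + ((t : ℝ) : ℂ) • (σ * Ztil) = -ρ) :
    (∀ Z : Matrix (Fin d) (Fin d) ℂ, loss t ρ σ Ztil ≤ loss t ρ σ Z) ∧
      loss t ρ σ Ztil = ⨅ Z : Matrix (Fin d) (Fin d) ℂ, loss t ρ σ Z := by
  have hgrad := lossGrad_eq_zero_of_sylvester hρ.1 hσ.1 hZ
  have hmin (Z : Matrix (Fin d) (Fin d) ℂ) : loss t ρ σ Ztil ≤ loss t ρ σ Z := by
    rw [← add_sub_cancel Ztil Z, loss_add hρ.1 hσ.1, hgrad, zero_mul, trace_zero,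
      Complex.zero_re, mul_zero, add_zero, le_add_iff_nonneg_right]
    exact add_nonneg
      (mul_nonneg (sub_nonneg.mpr ht.2) (re_trace_mul_conjTranspose_mul_nonneg hρ _))
      (mul_nonneg ht.1 (re_trace_mul_mul_conjTranspose_nonneg hσ _))
  exact ⟨hmin, le_antisymm (le_ciInf hmin)
    (ciInf_le ⟨_, Set.forall_mem_range.mpr hmin⟩ Ztil)⟩

end QRE
end
end

section
/- Let ρ and σ be positive semidefinite Hermitian matrices on ℂ^d with supp(ρ) ⊆ supp(σ), and let t ∈ (0,1]. Then the Sylvester equation (1−t)·Zρ + t·σZ = −ρ in the unknown d×d complex matrix Z admits at least one solution, and the solution is unique if and only if at least one of ρ and σ is full-rank (invertible). -/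
noncomputable section

/-!
Write `T Z = a • (Z * A) + b • (B * Z)` with `0 ≤ a`, `0 < b` and `A`, `B` positive
semidefinite. Pairing `T W = 0` with `W` through the trace gives
`a tr (W A Wᴴ) + b tr (Wᴴ B W) = 0`, a sum of nonnegative terms, so `B W = 0`. Hence `T` is
injective on the right ideal `B · Mₙ`, which it preserves, so it maps that ideal onto itself;
`supp A ⊆ supp B` places `A` in the ideal, which gives a solution of `T Z = A`. Uniqueness is
injectivity of `T`: if `B` is invertible then `B W = 0` forces `W = 0`, and otherwise any `v ≠ 0`
in `ker B ⊆ ker A` gives the kernel element `v vᴴ`. Finally `supp A ⊆ supp B` makes `B`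
invertible as soon as `A` is.
-/

open scoped ComplexOrder

namespace LinearMap

lemma existsUnique_eq_iff_ker_eq_bot {R M N : Type*} [Ring R] [AddCommGroup M] [AddCommGroup N]
    [Module R M] [Module R N] (f : M →ₗ[R] N) {y : N} (hy : y ∈ range f) :
    (∃! x, f x = y) ↔ ker f = ⊥ := by
  obtain ⟨x, rfl⟩ := hy
  refine ⟨fun ⟨x₀, _, huniq⟩ => ker_eq_bot'.2 fun w hw => ?_,
    fun h => ⟨x, rfl, fun z hz => ker_eq_bot.1 h hz⟩⟩
  simpa using (huniq (x + w) (by simp [hw])).trans (huniq x rfl).symm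

lemma le_range_of_mapsTo_of_disjoint_ker {K V : Type*} [DivisionRing K] [AddCommGroup V]
    [Module K V] [FiniteDimensional K V] (f : V →ₗ[K] V) {p : Submodule K V}
    (hmaps : p ≤ p.comap f) (hdisj : Disjoint p (ker f)) : p ≤ range f := by
  have hinj : Function.Injective (f.restrict hmaps) := by
    rw [← ker_eq_bot, ker_eq_bot']
    intro x hx
    exact Subtype.ext (Submodule.disjoint_def.1 hdisj x x.2 (congr_arg Subtype.val hx))
  intro x hx
  obtain ⟨y, hy⟩ := injective_iff_surjective.1 hinj ⟨x, hx⟩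
  exact ⟨y, congr_arg Subtype.val hy⟩

end LinearMap

namespace Matrix

variable {𝕜 n : Type*} [RCLike 𝕜] [Fintype n]

lemma star_mulVec_dotProduct_mulVec_mulVec (W B : Matrix n n 𝕜) (x : n → 𝕜) :
    star (W *ᵥ x) ⬝ᵥ B *ᵥ W *ᵥ x = star x ⬝ᵥ (Wᴴ * B * W) *ᵥ x := by
  rw [star_mulVec, ← dotProduct_mulVec, mulVec_mulVec, mulVec_mulVec, Matrix.mul_assoc]

lemma PosSemidef.mul_eq_zero_of_conjTranspose_mul_mul_eq_zero [DecidableEq n]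
    {B W : Matrix n n 𝕜} (hB : B.PosSemidef) (h : Wᴴ * B * W = 0) : B * W = 0 := by
  refine ext_of_mulVec_single fun j => ?_
  rw [← mulVec_mulVec, zero_mulVec, ← hB.dotProduct_mulVec_zero_iff,
    star_mulVec_dotProduct_mulVec_mulVec, h, zero_mulVec, dotProduct_zero]

lemma exists_mul_eq_of_range_mulVecLin_le {R m p q : Type*} [CommSemiring R] [Fintype p]
    [Fintype q] [DecidableEq p] {A : Matrix m p R} {B : Matrix m q R}
    (h : LinearMap.range A.mulVecLin ≤ LinearMap.range B.mulVecLin) :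
    ∃ Y : Matrix q p R, B * Y = A := by
  choose y hy using fun j : p => h ⟨Pi.single j 1, rfl⟩
  refine ⟨of fun i j => y j i, ext_of_mulVec_single fun j => ?_⟩
  rw [← mulVec_mulVec, mulVec_single_one]
  exact hy j

lemma isUnit_of_range_mulVecLin_le {R m : Type*} [CommRing R] [Fintype m] [DecidableEq m]
    {A B : Matrix m m R} (hA : IsUnit A)
    (h : LinearMap.range A.mulVecLin ≤ LinearMap.range B.mulVecLin) : IsUnit B := by
  have hA : LinearMap.range A.mulVecLin = ⊤ :=
    LinearMap.range_eq_top.2 (mulVec_surjective_iff_isUnit.2 hA)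
  exact mulVec_surjective_iff_isUnit.1 (LinearMap.range_eq_top.1 (top_le_iff.1 (hA ▸ h)))

lemma ker_mulVecLin_le_of_range_le {A B : Matrix n n 𝕜} (hA : A.PosSemidef) (hB : B.IsHermitian)
    (h : LinearMap.range A.mulVecLin ≤ LinearMap.range B.mulVecLin) :
    LinearMap.ker B.mulVecLin ≤ LinearMap.ker A.mulVecLin := by
  intro v hv
  obtain ⟨y, hy⟩ := h ⟨v, rfl⟩
  rw [LinearMap.mem_ker, mulVecLin_apply] at hv ⊢
  simp only [mulVecLin_apply] at hy
  rw [← hA.dotProduct_mulVec_zero_iff, ← hy, dotProduct_mulVec, ← hB.eq, ← star_mulVec, hv,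
    star_zero, zero_dotProduct]

def sylvesterOp (a b : 𝕜) (A B : Matrix n n 𝕜) :
    Matrix n n 𝕜 →ₗ[𝕜] Matrix n n 𝕜 :=
  a • LinearMap.mulRight 𝕜 A + b • LinearMap.mulLeft 𝕜 B

@[simp]
lemma sylvesterOp_apply (a b : 𝕜) (A B Z : Matrix n n 𝕜) :
    sylvesterOp a b A B Z = a • (Z * A) + b • (B * Z) := rfl

lemma mul_eq_zero_of_sylvesterOp_eq_zero [DecidableEq n] {a b : 𝕜} (ha : 0 ≤ a) (hb : 0 < b)
    {A B W : Matrix n n 𝕜} (hA : A.PosSemidef) (hB : B.PosSemidef)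
    (hW : sylvesterOp a b A B W = 0) : B * W = 0 := by
  have hWBW := hB.conjTranspose_mul_mul_same W
  have hsum : a * (W * A * Wᴴ).trace + b * (Wᴴ * B * W).trace = 0 := by
    have := congr_arg (fun M => (Wᴴ * M).trace) hW
    simp only [sylvesterOp_apply, Matrix.mul_add, Matrix.mul_smul, trace_add, trace_smul,
      smul_eq_mul, Matrix.mul_zero, trace_zero] at this
    rwa [trace_mul_comm Wᴴ, ← Matrix.mul_assoc Wᴴ] at this
  have htr := ((add_eq_zero_iff_of_nonneg
    (mul_nonneg ha (hA.mul_mul_conjTranspose_same W).trace_nonneg)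
    (mul_nonneg hb.le hWBW.trace_nonneg)).1 hsum).2
  exact hB.mul_eq_zero_of_conjTranspose_mul_mul_eq_zero
    (hWBW.trace_eq_zero_iff.1 ((mul_eq_zero.1 htr).resolve_left hb.ne'))

theorem mem_range_sylvesterOp [DecidableEq n] {a b : 𝕜} (ha : 0 ≤ a) (hb : 0 < b)
    {A B : Matrix n n 𝕜} (hA : A.PosSemidef) (hB : B.PosSemidef)
    (hAB : LinearMap.range A.mulVecLin ≤ LinearMap.range B.mulVecLin) :
    A ∈ LinearMap.range (sylvesterOp a b A B) := by
  have hmaps : LinearMap.range (LinearMap.mulLeft 𝕜 B) ≤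
      (LinearMap.range (LinearMap.mulLeft 𝕜 B)).comap (sylvesterOp a b A B) := by
    rintro _ ⟨Y, rfl⟩
    exact ⟨a • (Y * A) + b • (B * Y), by simp [Matrix.mul_add, Matrix.mul_assoc]⟩
  have hdisj : Disjoint (LinearMap.range (LinearMap.mulLeft 𝕜 B))
      (LinearMap.ker (sylvesterOp a b A B)) := by
    refine Submodule.disjoint_def.2 ?_
    rintro _ ⟨Y, rfl⟩ hY
    have hBBY : Bᴴ * B * Y = 0 := by
      rw [hB.isHermitian.eq, Matrix.mul_assoc]
      exact mul_eq_zero_of_sylvesterOp_eq_zero ha hb hA hB hY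
    exact (conjTranspose_mul_self_mul_eq_zero B Y).1 hBBY
  obtain ⟨Y, hY⟩ := exists_mul_eq_of_range_mulVecLin_le hAB
  exact LinearMap.le_range_of_mapsTo_of_disjoint_ker _ hmaps hdisj ⟨Y, hY⟩

theorem ker_sylvesterOp_eq_bot_iff [DecidableEq n] {a b : 𝕜} (ha : 0 ≤ a) (hb : 0 < b)
    {A B : Matrix n n 𝕜} (hA : A.PosSemidef) (hB : B.PosSemidef)
    (hker : LinearMap.ker B.mulVecLin ≤ LinearMap.ker A.mulVecLin) :
    LinearMap.ker (sylvesterOp a b A B) = ⊥ ↔ IsUnit B := by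
  refine ⟨fun h => ?_, fun hBu => LinearMap.ker_eq_bot'.2 fun W hW =>
    hBu.mul_right_eq_zero.1 (mul_eq_zero_of_sylvesterOp_eq_zero ha hb hA hB hW)⟩
  by_contra hBu
  obtain ⟨v, hv0, hBv⟩ : ∃ v ≠ 0, B *ᵥ v = 0 := by
    rwa [exists_mulVec_eq_zero_iff, ← not_ne_iff, ← isUnit_iff_ne_zero,
      ← isUnit_iff_isUnit_det]
  have hAv : A *ᵥ v = 0 := hker hBv
  have hW : vecMulVec v (star v) ∈ LinearMap.ker (sylvesterOp a b A B) := by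
    rw [LinearMap.mem_ker, sylvesterOp_apply, vecMulVec_mul, mul_vecMulVec, hBv,
      ← hA.isHermitian.eq, ← star_mulVec, hAv]
    simp
  rw [h, Submodule.mem_bot, vecMulVec_eq_zero] at hW
  exact hW.elim hv0 (star_eq_zero.not.2 hv0)

end Matrix

namespace QRE

variable {d : ℕ}

/-- The Sylvester equation `(1−t) Zρ + t σZ = −ρ` always admits a solution, which is
unique if and only if at least one of `ρ` and `σ` is invertible. -/
theorem sylvester_exists_unique_iff (ρ σ : Matrix (Fin d) (Fin d) ℂ)
    (hρ : ρ.PosSemidef) (hσ : σ.PosSemidef)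
    (hsupp : LinearMap.range ρ.mulVecLin ≤ LinearMap.range σ.mulVecLin)
    (t : ℝ) (ht : t ∈ Set.Ioc (0 : ℝ) 1) :
    (∃ Z : Matrix (Fin d) (Fin d) ℂ,
      ((1 - t : ℝ) : ℂ) • (Z * ρ) + ((t : ℝ) : ℂ) • (σ * Z) = -ρ) ∧
    ((∃! Z : Matrix (Fin d) (Fin d) ℂ,
        ((1 - t : ℝ) : ℂ) • (Z * ρ) + ((t : ℝ) : ℂ) • (σ * Z) = -ρ) ↔
      (IsUnit ρ ∨ IsUnit σ)) := by
  have ha : (0 : ℂ) ≤ ((1 - t : ℝ) : ℂ) := Complex.zero_le_real.2 (sub_nonneg.2 ht.2)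
  have hb : (0 : ℂ) < ((t : ℝ) : ℂ) := Complex.zero_lt_real.2 ht.1
  have hsol := neg_mem (Matrix.mem_range_sylvesterOp ha hb hρ hσ hsupp)
  refine ⟨hsol, (LinearMap.existsUnique_eq_iff_ker_eq_bot _ hsol).trans ?_⟩
  rw [Matrix.ker_sylvesterOp_eq_bot_iff ha hb hρ hσ
      (Matrix.ker_mulVecLin_le_of_range_le hρ hσ.isHermitian hsupp),
    or_iff_right_of_imp (Matrix.isUnit_of_range_mulVecLin_le · hsupp)]

end QRE
end
end

section
/- Let ρ be a quantum state on ℂ^d, U and V unitary d×d matrices, and i ∈ {1,…,d} with |i⟩ the i-th standard basis vector. Let S be the swap unitary on ℂ^d ⊗ ℂ^d (S(u⊗v) = v⊗u), let W := (U⊗I)·S·(V⊗I), let H be the 2×2 Hadamard matrix, and let χ := (H⊗I_{d²}) · (|0⟩⟨0|⊗I_{d²} + |1⟩⟨1|⊗W) · (H⊗I_{d²}), a unitary on ℂ² ⊗ ℂ^d ⊗ ℂ^d. Then 2·tr[ (|0⟩⟨0|⊗I_{d²}) · χ · (|0⟩⟨0| ⊗ ρ ⊗ |i⟩⟨i|)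 · χ† ] − 1 = Re tr[ρ · U|i⟩⟨i|V]. -/
noncomputable section

namespace QRE

open scoped ComplexOrder

open Matrix

variable {d : ℕ}

open scoped Kronecker

/-- The Hadamard matrix `H = (1/√2)·[[1,1],[1,−1]]`. -/
def Hadamard : Matrix (Fin 2) (Fin 2) ℂ :=
  ((Real.sqrt 2 : ℝ) : ℂ)⁻¹ • !![1, 1; 1, -1]

/-- The swap unitary on `ℂ^d ⊗ ℂ^d`: `S(u⊗v) = v⊗u`. -/
def swapMatrix : Matrix (Fin d × Fin d) (Fin d × Fin d) ℂ :=
  Matrix.of fun p q => if p.1 = q.2 ∧ p.2 = q.1 then 1 else 0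

/-!
Compressed to the `|0⟩` block of the control qubit, `χ` becomes `(1 + W)/2`, because
`⟨0|H|k⟩⟨k|H|0⟩ = 1/2` for both `k`. The measured probability is therefore
`¼ tr[(1 + W) σ (1 + W)†] = ½ (1 + Re tr[W σ])` for `σ = ρ ⊗ |i⟩⟨i|` and `W` unitary. The swap
trick `tr[S (A ⊗ B)] = tr[A B]` then turns `tr[(U ⊗ I) S (V ⊗ I) (ρ ⊗ |i⟩⟨i|)]` into
`tr[ρ U |i⟩⟨i| V]`.
-/

section Compression

variable {R n : Type*} [CommSemiring R] [StarRing R] [Fintype n]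

lemma trace_mul_mul_mul_conjTranspose_eq_of_compress {P X B : Matrix n n R}
    (hP : P * P = P) (hPh : Pᴴ = P) (hB : P * B * P = B) :
    trace (P * X * B * Xᴴ) = trace (P * X * P * B * (P * X * P)ᴴ) := by
  calc trace (P * X * B * Xᴴ) = trace (P * P * X * B * Xᴴ) := by rw [hP]
    _ = trace (P * X * B * Xᴴ * P) := by rw [trace_mul_comm _ P]; simp only [mul_assoc]
    _ = trace (P * X * P * B * (P * X * P)ᴴ) := by
      have hB' (Y : Matrix n n R) : P * (B * (P * Y)) = B * Y := by
        rw [← mul_assoc B, ← mul_assoc, ← mul_assoc, hB]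
      simp only [conjTranspose_mul, hPh, mul_assoc, hB']

end Compression

lemma conjTranspose_swapMatrix :
    (swapMatrix : Matrix (Fin d × Fin d) (Fin d × Fin d) ℂ)ᴴ = swapMatrix := by
  ext p q
  simp only [conjTranspose_apply, swapMatrix, of_apply, apply_ite star, star_one, star_zero]
  exact if_congr ⟨fun h => ⟨h.2.symm, h.1.symm⟩, fun h => ⟨h.2.symm, h.1.symm⟩⟩ rfl rfl

lemma swapMatrix_mul_self :
    (swapMatrix : Matrix (Fin d × Fin d) (Fin d × Fin d) ℂ) * swapMatrix = 1 := by
  ext ⟨a, b⟩ ⟨c, e⟩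
  simp [mul_apply, swapMatrix, Fintype.sum_prod_type, one_apply, Prod.ext_iff, ite_and]

lemma swapMatrix_mem_unitaryGroup :
    (swapMatrix : Matrix (Fin d × Fin d) (Fin d × Fin d) ℂ) ∈ unitaryGroup (Fin d × Fin d) ℂ := by
  rw [mem_unitaryGroup_iff', star_eq_conjTranspose, conjTranspose_swapMatrix, swapMatrix_mul_self]

lemma trace_swapMatrix_mul_kronecker (A B : Matrix (Fin d) (Fin d) ℂ) :
    trace (swapMatrix * (A ⊗ₖ B)) = trace (A * B) := by
  simp only [trace, diag, mul_apply, swapMatrix, of_apply, kroneckerMap_apply,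
    Fintype.sum_prod_type, ite_mul, one_mul, zero_mul]
  rw [Finset.sum_comm]
  simp [ite_and]

lemma trace_kronecker_one_mul_swapMatrix_mul_kronecker_one_mul_kronecker
    (U V A B : Matrix (Fin d) (Fin d) ℂ) :
    trace ((U ⊗ₖ (1 : Matrix (Fin d) (Fin d) ℂ)) * swapMatrix * (V ⊗ₖ 1) * (A ⊗ₖ B)) =
      trace (A * (U * B * V)) := by
  calc trace ((U ⊗ₖ (1 : Matrix (Fin d) (Fin d) ℂ)) * swapMatrix * (V ⊗ₖ 1) * (A ⊗ₖ B))
      = trace (swapMatrix * ((V * A * U) ⊗ₖ B)) := by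
        rw [mul_assoc, mul_assoc, trace_mul_comm, mul_assoc, ← mul_kronecker_mul,
          ← mul_kronecker_mul, one_mul, mul_one, mul_assoc]
    _ = trace (A * (U * B * V)) := by
        rw [trace_swapMatrix_mul_kronecker, trace_mul_comm A, mul_assoc (U * B) V A,
          trace_mul_comm (U * B), ← mul_assoc]

section HadamardTest

variable {ι : Type*} [Fintype ι] [DecidableEq ι]

def hadamardTest (W : Matrix ι ι ℂ) : Matrix (Fin 2 × ι) (Fin 2 × ι) ℂ :=
  (Hadamard ⊗ₖ 1) * (single 0 0 1 ⊗ₖ 1 + single 1 1 1 ⊗ₖ W) * (Hadamard ⊗ₖ 1)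

lemma Hadamard_mul_single_mul_Hadamard_zero_zero (k : Fin 2) :
    (Hadamard * single k k (1 : ℂ) * Hadamard : Matrix (Fin 2) (Fin 2) ℂ) 0 0 = 2⁻¹ := by
  have hsqrt : ((Real.sqrt 2 : ℝ) : ℂ)⁻¹ * ((Real.sqrt 2 : ℝ) : ℂ)⁻¹ = 2⁻¹ := by
    rw [← mul_inv, ← Complex.ofReal_mul, Real.mul_self_sqrt zero_le_two, Complex.ofReal_ofNat]
  fin_cases k <;>
    simpa [Hadamard, mul_apply, Fin.sum_univ_two, single_apply, vecMul, dotProduct] using hsqrt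

lemma single_kronecker_one_mul_hadamardTest_mul_single_kronecker_one (W : Matrix ι ι ℂ) :
    (single 0 0 1 ⊗ₖ 1) * hadamardTest W * (single 0 0 1 ⊗ₖ 1) =
      single 0 0 1 ⊗ₖ ((2 : ℂ)⁻¹ • (1 + W)) := by
  have hsplit : hadamardTest W = (Hadamard * single 0 0 1 * Hadamard) ⊗ₖ 1 +
      (Hadamard * single 1 1 1 * Hadamard) ⊗ₖ W := by
    simp only [hadamardTest, mul_add, add_mul, ← mul_kronecker_mul, one_mul, mul_one]
  rw [hsplit, mul_add, add_mul, ← mul_kronecker_mul, ← mul_kronecker_mul, ← mul_kronecker_mul,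
    ← mul_kronecker_mul, single_mul_mul_single, single_mul_mul_single,
    Hadamard_mul_single_mul_Hadamard_zero_zero, Hadamard_mul_single_mul_Hadamard_zero_zero,
    kronecker_smul, ← smul_kronecker, smul_single, kronecker_add]
  simp

lemma trace_half_one_add_mul_mul_conjTranspose {W σ : Matrix ι ι ℂ}
    (hW : W ∈ unitaryGroup ι ℂ) (hσ : σ.IsHermitian) :
    trace ((2 : ℂ)⁻¹ • (1 + W) * σ * ((2 : ℂ)⁻¹ • (1 + W))ᴴ) =
      (trace σ + (trace (W * σ)).re) / 2 := by
  have hconj : trace (W * σ * Wᴴ) = trace σ := by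
    rw [trace_mul_cycle, ← star_eq_conjTranspose, mem_unitaryGroup_iff'.mp hW, one_mul]
  have hadj : trace (σ * Wᴴ) = star (trace (W * σ)) := by
    rw [← trace_conjTranspose, conjTranspose_mul, hσ.eq]
  have hre : trace (W * σ) + star (trace (W * σ)) = 2 * (trace (W * σ)).re := by
    rw [Complex.star_def, Complex.add_conj, Complex.ofReal_mul, Complex.ofReal_ofNat]
  simp only [conjTranspose_smul, conjTranspose_add, conjTranspose_one, Matrix.smul_mul,
    Matrix.mul_smul, add_mul, mul_add, one_mul, mul_one, trace_smul, trace_add, hconj, hadj,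
    smul_eq_mul, star_inv₀, star_ofNat]
  linear_combination (4 : ℂ)⁻¹ * hre

lemma trace_hadamardTest {W σ : Matrix ι ι ℂ} (hW : W ∈ unitaryGroup ι ℂ) (hσ : σ.IsHermitian) :
    trace ((single (0 : Fin 2) 0 (1 : ℂ) ⊗ₖ (1 : Matrix ι ι ℂ)) * hadamardTest W *
      (single 0 0 1 ⊗ₖ σ) * (hadamardTest W)ᴴ) =
      (trace σ + (trace (W * σ)).re) / 2 := by
  have hP : (single (0 : Fin 2) 0 (1 : ℂ) ⊗ₖ (1 : Matrix ι ι ℂ)) * (single 0 0 1 ⊗ₖ 1) =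
      (single 0 0 1 ⊗ₖ 1 : Matrix (Fin 2 × ι) (Fin 2 × ι) ℂ) := by
    rw [← mul_kronecker_mul, single_mul_single_same, one_mul, mul_one]
  have hPh : (single (0 : Fin 2) 0 (1 : ℂ) ⊗ₖ (1 : Matrix ι ι ℂ))ᴴ =
      (single 0 0 1 ⊗ₖ 1 : Matrix (Fin 2 × ι) (Fin 2 × ι) ℂ) := by
    rw [conjTranspose_kronecker, conjTranspose_single, star_one, conjTranspose_one]
  have hB : (single (0 : Fin 2) (0 : Fin 2) (1 : ℂ) ⊗ₖ (1 : Matrix ι ι ℂ)) *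
      (single (0 : Fin 2) (0 : Fin 2) (1 : ℂ) ⊗ₖ σ) *
      (single (0 : Fin 2) (0 : Fin 2) (1 : ℂ) ⊗ₖ (1 : Matrix ι ι ℂ)) =
      single (0 : Fin 2) (0 : Fin 2) (1 : ℂ) ⊗ₖ σ := by
    rw [← mul_kronecker_mul, ← mul_kronecker_mul, single_mul_single_same, single_mul_single_same,
      one_mul, mul_one, one_mul, mul_one]
  rw [trace_mul_mul_mul_conjTranspose_eq_of_compress hP hPh hB,
    single_kronecker_one_mul_hadamardTest_mul_single_kronecker_one, conjTranspose_kronecker,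
    ← mul_kronecker_mul, ← mul_kronecker_mul, trace_kronecker, conjTranspose_single, star_one,
    single_mul_single_same, single_mul_single_same, trace_single_eq_same, mul_one, one_mul,
    trace_half_one_add_mul_mul_conjTranspose hW hσ, one_mul]

end HadamardTest

/-- The Hadamard-test identity for the extended SWAP test (case `p = 1`):
`2 tr[(|0⟩⟨0|⊗I) χ (|0⟩⟨0| ⊗ ρ ⊗ |i⟩⟨i|) χ†] − 1 = Re tr[ρ U|i⟩⟨i|V]`. -/
theorem extended_swap_test (ρ : Matrix (Fin d) (Fin d) ℂ) (hρ : IsState ρ)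
    (U V : Matrix (Fin d) (Fin d) ℂ)
    (hU : U ∈ Matrix.unitaryGroup (Fin d) ℂ)
    (hV : V ∈ Matrix.unitaryGroup (Fin d) ℂ) (i : Fin d) :
    2 * (Matrix.trace
        ((Matrix.single (0 : Fin 2) (0 : Fin 2) (1 : ℂ) ⊗ₖ
            (1 : Matrix (Fin d × Fin d) (Fin d × Fin d) ℂ)) *
          ((Hadamard ⊗ₖ (1 : Matrix (Fin d × Fin d) (Fin d × Fin d) ℂ)) *
            (Matrix.single (0 : Fin 2) (0 : Fin 2) (1 : ℂ) ⊗ₖ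
                (1 : Matrix (Fin d × Fin d) (Fin d × Fin d) ℂ) +
              Matrix.single (1 : Fin 2) (1 : Fin 2) (1 : ℂ) ⊗ₖ
                ((U ⊗ₖ (1 : Matrix (Fin d) (Fin d) ℂ)) * swapMatrix *
                  (V ⊗ₖ (1 : Matrix (Fin d) (Fin d) ℂ)))) *
            (Hadamard ⊗ₖ (1 : Matrix (Fin d × Fin d) (Fin d × Fin d) ℂ))) *
          (Matrix.single (0 : Fin 2) (0 : Fin 2) (1 : ℂ) ⊗ₖ
            (ρ ⊗ₖ Matrix.single i i (1 : ℂ))) *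
          ((Hadamard ⊗ₖ (1 : Matrix (Fin d × Fin d) (Fin d × Fin d) ℂ)) *
            (Matrix.single (0 : Fin 2) (0 : Fin 2) (1 : ℂ) ⊗ₖ
                (1 : Matrix (Fin d × Fin d) (Fin d × Fin d) ℂ) +
              Matrix.single (1 : Fin 2) (1 : Fin 2) (1 : ℂ) ⊗ₖ
                ((U ⊗ₖ (1 : Matrix (Fin d) (Fin d) ℂ)) * swapMatrix *
                  (V ⊗ₖ (1 : Matrix (Fin d) (Fin d) ℂ)))) *
            (Hadamard ⊗ₖ (1 : Matrix (Fin d × Fin d) (Fin d × Fin d) ℂ)))ᴴ)).re - 1 =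
      (Matrix.trace (ρ * (U * Matrix.single i i (1 : ℂ) * V))).re := by
  obtain ⟨hpsd, htrace⟩ := hρ
  have hW : (U ⊗ₖ (1 : Matrix (Fin d) (Fin d) ℂ)) * swapMatrix * (V ⊗ₖ 1) ∈
      unitaryGroup (Fin d × Fin d) ℂ :=
    mul_mem (mul_mem (kronecker_mem_unitary hU (one_mem _)) swapMatrix_mem_unitaryGroup)
      (kronecker_mem_unitary hV (one_mem _))
  have hσ : (ρ ⊗ₖ single i i (1 : ℂ)).IsHermitian := by
    rw [IsHermitian, conjTranspose_kronecker, hpsd.isHermitian.eq, conjTranspose_single, star_one]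
  rw [← hadamardTest, trace_hadamardTest hW hσ, trace_kronecker, htrace, trace_single_eq_same,
    trace_kronecker_one_mul_swapMatrix_mul_kronecker_one_mul_kronecker, one_mul,
    ← Complex.ofReal_one, ← Complex.ofReal_add, ← Complex.ofReal_ofNat, ← Complex.ofReal_div,
    Complex.ofReal_re]
  ring

end QRE
end
end

section
/- Let ρ and σ be quantum states on ℂ^d with supp(ρ) = supp(σ), let m ≥ 1, and let t₁,…,t_m ∈ [0,1] and w₁,…,w_m > 0 be such that the function r_m(x) := (1/ln 2)·Σ_{j=1}^m w_j f_{t_j}(x) satisfies, for all x > 0, −r_m(x) − (1/(m² ln 2))·(1/x + x − 2) ≤ −log₂ x ≤ −r_m(x). Then 0 ≤ D_{−r_m}(ρ‖σ) − D(ρ‖σ) ≤ (Q₀(ρ‖σ) + Q₂(ρ‖σ) − 2)/(m² ln 2), where D_{−r_m}(ρ‖σ) = −Σ_{j=1}^m (w_j/ln 2)·D_{f_{t_j}}(ρ‖σ), Q₀(ρ‖σ) = tr[ρ⁰σ] with ρ⁰ the projection onto supp(ρ), and Q₂(ρ‖σ) = tr[ρ² σ⁺] with σ⁺ the Moore–Penrose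 pseudo-inverse of σ. -/
/-!
Diagonalise `ρ = Σ η_j |p_j⟩⟨p_j|` and `σ = Σ μ_k |q_k⟩⟨q_k|`. By definition
`D_φ(ρ‖σ) = Σ_{η_j, μ_k > 0} η_j φ(μ_k / η_j) |⟨p_j, q_k⟩|²`, and every other quantity in the
statement is such a value: `D` is `D_φ` for `φ = -log₂`, `Q₀` for `φ(x) = x`, `Q₂` for
`φ(x) = 1/x`, and `tr ρ = 1` for `φ = 1`. For this the support hypothesis is essential: it
forces `⟨p_j, q_k⟩ = 0` whenever `η_j > 0 = μ_k`, so the terms of the traces that `D_φ` omits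
vanish. Since the weights `η_j |⟨p_j, q_k⟩|²` are nonnegative, `φ ↦ D_φ` is linear and monotone
in the values of `φ` on `(0, ∞)`, and the assumed pointwise sandwich of `-log₂ x` carries over.
-/

noncomputable section

namespace QRE

open scoped ComplexOrder

open Matrix

variable {d : ℕ}

lemma rankOne_mul_rankOne (u v : EuclideanSpace ℂ (Fin d)) :
    rankOne u * rankOne v = inner ℂ u v • vecMulVec u (star v) := by
  change vecMulVec u (star u) * vecMulVec v (star v) = _
  rw [vecMulVec_mul_vecMulVec, EuclideanSpace.inner_eq_star_dotProduct, dotProduct_comm]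
  ext i l
  simp [vecMulVec_apply, mul_left_comm]

lemma trace_rankOne_mul_rankOne (u v : EuclideanSpace ℂ (Fin d)) :
    trace (rankOne u * rankOne v) = ((‖inner ℂ u v‖ ^ 2 : ℝ) : ℂ) := by
  rw [rankOne_mul_rankOne, trace_smul, trace_vecMulVec, ← EuclideanSpace.inner_eq_star_dotProduct,
    ← inner_conj_symm v u, smul_eq_mul, RCLike.mul_conj]
  push_cast; rfl

lemma rankOne_mul_rankOne_of_orthonormal
    (b : OrthonormalBasis (Fin d) ℂ (EuclideanSpace ℂ (Fin d))) (j k : Fin d) :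
    rankOne (b j) * rankOne (b k) = if j = k then rankOne (b j) else 0 := by
  rw [rankOne_mul_rankOne, orthonormal_iff_ite.mp b.orthonormal]
  split_ifs with h
  · subst h; exact one_smul _ _
  · exact zero_smul _ _

lemma sum_rankOne (b : OrthonormalBasis (Fin d) ℂ (EuclideanSpace ℂ (Fin d))) :
    ∑ j, rankOne (b j) = 1 := by
  ext i l
  have h := b.sum_inner_mul_inner (EuclideanSpace.single i 1) (EuclideanSpace.single l 1)
  simp only [EuclideanSpace.inner_single_left, EuclideanSpace.inner_single_right, map_one,
    one_mul] at h
  simp only [Matrix.sum_apply, rankOne, of_apply, one_apply, h]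
  by_cases hil : i = l <;> simp [hil]

def spectralSum (b : OrthonormalBasis (Fin d) ℂ (EuclideanSpace ℂ (Fin d))) (a : Fin d → ℝ) :
    Matrix (Fin d) (Fin d) ℂ :=
  ∑ j, (a j : ℂ) • rankOne (b j)

section spectralSum

variable (b : OrthonormalBasis (Fin d) ℂ (EuclideanSpace ℂ (Fin d)))

lemma spectralSum_one : spectralSum b 1 = 1 := by
  simp [spectralSum, sum_rankOne]

lemma spectralSum_mul_spectralSum (a a' : Fin d → ℝ) :
    spectralSum b a * spectralSum b a' = spectralSum b (a * a') := by
  simp only [spectralSum, Finset.sum_mul_sum, smul_mul_smul_comm,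
    rankOne_mul_rankOne_of_orthonormal, smul_ite, smul_zero, Finset.sum_ite_eq,
    Finset.mem_univ, if_true, Pi.mul_apply, Complex.ofReal_mul]

lemma re_trace_spectralSum_mul_spectralSum
    (b' : OrthonormalBasis (Fin d) ℂ (EuclideanSpace ℂ (Fin d))) (a a' : Fin d → ℝ) :
    (trace (spectralSum b a * spectralSum b' a')).re =
      ∑ j, ∑ k, a j * a' k * ‖inner ℂ (b j) (b' k)‖ ^ 2 := by
  simp only [spectralSum, Finset.sum_mul_sum, smul_mul_smul_comm, trace_sum, trace_smul,
    trace_rankOne_mul_rankOne, Complex.re_sum, smul_eq_mul, ← Complex.ofReal_mul,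
    Complex.ofReal_re]

end spectralSum

lemma eq_spectralSum_eigenvalues {A : Matrix (Fin d) (Fin d) ℂ} (hA : A.IsHermitian) :
    A = spectralSum hA.eigenvectorBasis hA.eigenvalues := by
  conv_lhs => rw [← mul_one A, ← sum_rankOne hA.eigenvectorBasis, Finset.mul_sum]
  refine Finset.sum_congr rfl fun j _ => ?_
  change A * vecMulVec _ _ = _ • vecMulVec _ _
  rw [mul_vecMulVec, hA.mulVec_eigenvectorBasis, ← Complex.coe_smul, smul_vecMulVec]

lemma matFun_eq_spectralSum (g : ℝ → ℝ) {A : Matrix (Fin d) (Fin d) ℂ} (hA : A.IsHermitian) :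
    matFun g hA = spectralSum hA.eigenvectorBasis
      (fun j => if 0 < hA.eigenvalues j then g (hA.eigenvalues j) else 0) := by
  simp only [matFun, spectralSum, apply_ite (fun x : ℝ => (x : ℂ)), Complex.ofReal_zero]

lemma inner_eigenvectorBasis_eq_zero_of_range_le {ρ σ : Matrix (Fin d) (Fin d) ℂ}
    (hρ : ρ.IsHermitian) (hσ : σ.IsHermitian)
    (hsupp : LinearMap.range ρ.mulVecLin ≤ LinearMap.range σ.mulVecLin) {j k : Fin d}
    (hj : hρ.eigenvalues j ≠ 0) (hk : hσ.eigenvalues k = 0) :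
    inner ℂ (hρ.eigenvectorBasis j) (hσ.eigenvectorBasis k) = 0 := by
  have hp : ⇑(hρ.eigenvectorBasis j) ∈ LinearMap.range ρ.mulVecLin :=
    ⟨(hρ.eigenvalues j : ℂ)⁻¹ • ⇑(hρ.eigenvectorBasis j), by
      rw [mulVecLin_apply, mulVec_smul, hρ.mulVec_eigenvectorBasis, ← Complex.coe_smul,
        smul_smul, inv_mul_cancel₀ (by exact_mod_cast hj), one_smul]⟩
  obtain ⟨y, hy⟩ := hsupp hp
  have hq : σ *ᵥ ⇑(hσ.eigenvectorBasis k) = 0 := by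
    rw [hσ.mulVec_eigenvectorBasis, hk, zero_smul]
  rw [EuclideanSpace.inner_eq_star_dotProduct, ← hy, mulVecLin_apply, star_mulVec, hσ.eq,
    dotProduct_comm, ← dotProduct_mulVec, hq, dotProduct_zero]

lemma Df_eq_sum {ρ σ : Matrix (Fin d) (Fin d) ℂ} (hρ : ρ.PosSemidef) (hσ : σ.PosSemidef)
    (hsupp : LinearMap.range ρ.mulVecLin ≤ LinearMap.range σ.mulVecLin) (f : ℝ → ℝ)
    (F : ℝ → ℝ → ℝ) (hF : ∀ x > 0, ∀ y > 0, F x y = x * f (y / x)) (hF0 : ∀ y, F 0 y = 0) :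
    Df f hρ.1 hσ.1 = ∑ j, ∑ k, F (hρ.1.eigenvalues j) (hσ.1.eigenvalues k) *
      ‖inner ℂ (hρ.1.eigenvectorBasis j) (hσ.1.eigenvectorBasis k)‖ ^ 2 := by
  simp only [Df, trace_rankOne_mul_rankOne, Complex.ofReal_re]
  refine Finset.sum_congr rfl fun j _ => Finset.sum_congr rfl fun k _ => ?_
  obtain hj | hj := (hρ.eigenvalues_nonneg j).lt_or_eq
  · obtain hk | hk := (hσ.eigenvalues_nonneg k).lt_or_eq
    · rw [if_pos ⟨hj, hk⟩, hF _ hj _ hk]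
    · rw [if_neg (fun h => h.2.ne hk),
        inner_eigenvectorBasis_eq_zero_of_range_le hρ.1 hσ.1 hsupp hj.ne' hk.symm]
      simp
  · rw [if_neg (fun h => h.1.ne hj), ← hj, hF0, zero_mul]

section linearity

variable {ρ σ : Matrix (Fin d) (Fin d) ℂ} (hρ : ρ.IsHermitian) (hσ : σ.IsHermitian)

def dfLinearMap : (ℝ → ℝ) →ₗ[ℝ] ℝ where
  toFun f := Df f hρ hσ
  map_add' f g := by
    simp only [Df, ← Finset.sum_add_distrib]
    refine Finset.sum_congr rfl fun j _ => Finset.sum_congr rfl fun k _ => ?_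
    split_ifs
    · simp only [Pi.add_apply]; ring
    · simp
  map_smul' c f := by
    simp only [Df, Finset.mul_sum, RingHom.id_apply, smul_eq_mul]
    refine Finset.sum_congr rfl fun j _ => Finset.sum_congr rfl fun k _ => ?_
    split_ifs
    · simp only [Pi.smul_apply, smul_eq_mul]; ring
    · simp

lemma Df_add (f g : ℝ → ℝ) : Df (fun x => f x + g x) hρ hσ = Df f hρ hσ + Df g hρ hσ :=
  map_add (dfLinearMap hρ hσ) f g

lemma Df_sub (f g : ℝ → ℝ) : Df (fun x => f x - g x) hρ hσ = Df f hρ hσ - Df g hρ hσ :=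
  map_sub (dfLinearMap hρ hσ) f g

lemma Df_neg (f : ℝ → ℝ) : Df (fun x => -f x) hρ hσ = -Df f hρ hσ :=
  map_neg (dfLinearMap hρ hσ) f

lemma Df_const_mul (c : ℝ) (f : ℝ → ℝ) : Df (fun x => c * f x) hρ hσ = c * Df f hρ hσ :=
  map_smul (dfLinearMap hρ hσ) c f

lemma Df_sum {ι : Type*} (s : Finset ι) (f : ι → ℝ → ℝ) :
    Df (fun x => ∑ i ∈ s, f i x) hρ hσ = ∑ i ∈ s, Df (f i) hρ hσ := by
  rw [← Finset.sum_fn]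
  exact map_sum (dfLinearMap hρ hσ) f s

lemma Df_mono {f g : ℝ → ℝ} (hfg : ∀ x > 0, f x ≤ g x) : Df f hρ hσ ≤ Df g hρ hσ := by
  refine Finset.sum_le_sum fun j _ => Finset.sum_le_sum fun k _ => ?_
  split_ifs with h
  · rw [trace_rankOne_mul_rankOne, Complex.ofReal_re]
    gcongr
    exacts [h.1.le, hfg _ (div_pos h.2 h.1)]
  · rfl

end linearity

section identifications

variable {ρ σ : Matrix (Fin d) (Fin d) ℂ} (hρ : ρ.PosSemidef) (hσ : σ.PosSemidef)

lemma Df_const (hsupp : LinearMap.range ρ.mulVecLin ≤ LinearMap.range σ.mulVecLin) (c : ℝ) :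
    Df (fun _ => c) hρ.1 hσ.1 = c * (trace ρ).re := by
  rw [Df_eq_sum hρ hσ hsupp _ (fun x _ => x * c) (fun _ _ _ _ => rfl) fun _ => zero_mul c]
  conv_rhs => rw [← mul_one ρ, eq_spectralSum_eigenvalues hρ.1,
    ← spectralSum_one hσ.1.eigenvectorBasis, re_trace_spectralSum_mul_spectralSum]
  simp only [Finset.mul_sum, Pi.one_apply]
  exact Finset.sum_congr rfl fun j _ => Finset.sum_congr rfl fun k _ => by ring

lemma Qzero_eq_Df (hsupp : LinearMap.range ρ.mulVecLin ≤ LinearMap.range σ.mulVecLin) :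
    Qzero hρ.1 σ = Df (fun x => x) hρ.1 hσ.1 := by
  rw [Df_eq_sum hρ hσ hsupp _ (fun x y => (if 0 < x then 1 else 0) * y)
    (fun x hx y _ => by rw [if_pos hx, one_mul]; field_simp) fun _ => by simp]
  conv_lhs => rw [Qzero, suppProj, matFun_eq_spectralSum, eq_spectralSum_eigenvalues hσ.1,
    re_trace_spectralSum_mul_spectralSum]

lemma Qtwo_eq_Df (hsupp : LinearMap.range ρ.mulVecLin ≤ LinearMap.range σ.mulVecLin) :
    Qtwo ρ hσ.1 = Df (fun x => 1 / x) hρ.1 hσ.1 := by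
  rw [Df_eq_sum hρ hσ hsupp _ (fun x y => x * x * (if 0 < y then y⁻¹ else 0))
    (fun x hx y hy => by rw [if_pos hy]; field_simp) fun _ => by simp]
  have hsq : ρ * ρ = spectralSum hρ.1.eigenvectorBasis (hρ.1.eigenvalues * hρ.1.eigenvalues) := by
    conv_lhs => rw [eq_spectralSum_eigenvalues hρ.1, spectralSum_mul_spectralSum]
  rw [Qtwo, hsq, matFun_eq_spectralSum, re_trace_spectralSum_mul_spectralSum]
  rfl

lemma relEnt_eq_Df (hsupp : LinearMap.range ρ.mulVecLin ≤ LinearMap.range σ.mulVecLin) :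
    relEnt hρ.1 hσ.1 = Df (fun x => -Real.logb 2 x) hρ.1 hσ.1 := by
  let L : ℝ → ℝ := fun x => if 0 < x then Real.logb 2 x else 0
  rw [Df_eq_sum hρ hσ hsupp _ (fun x y => x * (L x - L y))
    (fun x hx y hy => by simp [L, hx, hy, Real.logb_div hy.ne' hx.ne']) fun _ => by simp]
  have hρρ : ρ * matFun (Real.logb 2) hρ.1 =
      spectralSum hρ.1.eigenvectorBasis (fun j => hρ.1.eigenvalues j * L (hρ.1.eigenvalues j)) *
        spectralSum hσ.1.eigenvectorBasis 1 := by
    rw [spectralSum_one, mul_one, matFun_eq_spectralSum]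
    nth_rw 1 [eq_spectralSum_eigenvalues hρ.1]
    rw [spectralSum_mul_spectralSum]
    rfl
  have hρσ : ρ * matFun (Real.logb 2) hσ.1 =
      spectralSum hρ.1.eigenvectorBasis hρ.1.eigenvalues *
        spectralSum hσ.1.eigenvectorBasis (fun k => L (hσ.1.eigenvalues k)) := by
    rw [matFun_eq_spectralSum]
    nth_rw 1 [eq_spectralSum_eigenvalues hρ.1]
  rw [relEnt, mul_sub, trace_sub, Complex.sub_re, hρρ, hρσ, re_trace_spectralSum_mul_spectralSum,
    re_trace_spectralSum_mul_spectralSum, ← Finset.sum_sub_distrib]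
  refine Finset.sum_congr rfl fun j _ => ?_
  rw [← Finset.sum_sub_distrib]
  refine Finset.sum_congr rfl fun k _ => ?_
  simp only [Pi.one_apply]
  ring

lemma Qzero_add_Qtwo_sub_two_eq_Df (htr : trace ρ = 1)
    (hsupp : LinearMap.range ρ.mulVecLin ≤ LinearMap.range σ.mulVecLin) :
    Qzero hρ.1 σ + Qtwo ρ hσ.1 - 2 = Df (fun x => 1 / x + x - 2) hρ.1 hσ.1 := by
  rw [Df_sub, Df_add, Qzero_eq_Df hρ hσ hsupp, Qtwo_eq_Df hρ hσ hsupp, Df_const hρ hσ hsupp,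
    htr, Complex.one_re, mul_one, add_comm (Df _ _ _)]

end identifications

theorem quadrature_error_relEnt_general (ρ σ : Matrix (Fin d) (Fin d) ℂ)
    (hρ : IsState ρ) (hσ : IsState σ)
    (hsupp : LinearMap.range ρ.mulVecLin = LinearMap.range σ.mulVecLin)
    (m : ℕ) (t w : Fin m → ℝ)
    (happrox : ∀ x > (0 : ℝ),
      -((1 / Real.log 2) * ∑ j, w j * ft (t j) x) -
          (1 / ((m : ℝ) ^ 2 * Real.log 2)) * (1 / x + x - 2) ≤ -Real.logb 2 x ∧
        -Real.logb 2 x ≤ -((1 / Real.log 2) * ∑ j, w j * ft (t j) x)) :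
    0 ≤ (-∑ j, (w j / Real.log 2) * Df (ft (t j)) hρ.1.1 hσ.1.1) -
        relEnt hρ.1.1 hσ.1.1 ∧
      (-∑ j, (w j / Real.log 2) * Df (ft (t j)) hρ.1.1 hσ.1.1) -
          relEnt hρ.1.1 hσ.1.1 ≤
        (Qzero hρ.1.1 σ + Qtwo ρ hσ.1.1 - 2) / ((m : ℝ) ^ 2 * Real.log 2) := by
  set K := (m : ℝ) ^ 2 * Real.log 2
  have hr : -∑ j, (w j / Real.log 2) * Df (ft (t j)) hρ.1.1 hσ.1.1 =
      Df (fun x => -((1 / Real.log 2) * ∑ j, w j * ft (t j) x)) hρ.1.1 hσ.1.1 := by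
    simp only [Df_neg, Df_const_mul, Df_sum, Finset.mul_sum]
    exact congrArg _ (Finset.sum_congr rfl fun j _ => by ring)
  have hQ : (Qzero hρ.1.1 σ + Qtwo ρ hσ.1.1 - 2) / K =
      Df (fun x => 1 / K * (1 / x + x - 2)) hρ.1.1 hσ.1.1 := by
    rw [Df_const_mul, ← Qzero_add_Qtwo_sub_two_eq_Df hρ.1 hσ.1 hρ.2 hsupp.le, one_div_mul_eq_div]
  rw [hr, relEnt_eq_Df hρ.1 hσ.1 hsupp.le, hQ]
  constructor
  · exact sub_nonneg.2 (Df_mono _ _ fun x hx => (happrox x hx).2)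
  · rw [sub_le_iff_le_add, ← Df_add]
    exact Df_mono _ _ fun x hx => by linarith [(happrox x hx).1]

/-- Quadrature error bound: `0 ≤ D_{−r_m}(ρ‖σ) − D(ρ‖σ) ≤ (Q₀ + Q₂ − 2)/(m² ln 2)`. -/
theorem quadrature_error_relEnt (ρ σ : Matrix (Fin d) (Fin d) ℂ)
    (hρ : IsState ρ) (hσ : IsState σ)
    (hsupp : LinearMap.range ρ.mulVecLin = LinearMap.range σ.mulVecLin)
    (m : ℕ) (hm : 1 ≤ m) (t w : Fin m → ℝ)
    (ht : ∀ j, t j ∈ Set.Icc (0 : ℝ) 1) (hw : ∀ j, 0 < w j)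
    (happrox : ∀ x > (0 : ℝ),
      -((1 / Real.log 2) * ∑ j, w j * ft (t j) x) -
          (1 / ((m : ℝ) ^ 2 * Real.log 2)) * (1 / x + x - 2) ≤ -Real.logb 2 x ∧
        -Real.logb 2 x ≤ -((1 / Real.log 2) * ∑ j, w j * ft (t j) x)) :
    0 ≤ (-∑ j, (w j / Real.log 2) * Df (ft (t j)) hρ.1.1 hσ.1.1) -
        relEnt hρ.1.1 hσ.1.1 ∧
      (-∑ j, (w j / Real.log 2) * Df (ft (t j)) hρ.1.1 hσ.1.1) -
          relEnt hρ.1.1 hσ.1.1 ≤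
        (Qzero hρ.1.1 σ + Qtwo ρ hσ.1.1 - 2) / ((m : ℝ) ^ 2 * Real.log 2) :=
  quadrature_error_relEnt_general ρ σ hρ hσ hsupp m t w happrox

end QRE
end
end
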